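/- (Corollary 1.) Let G be a real n×p matrix, V a real n×n diagonal matrix, g ∈ ℝ^p, v, r ∈ ℝ, b ∈ ℝ^p, and λ ∈ ℝ such that M := GᵀVG + λI is invertible. For ε in a neighborhood of 0 on which GᵀVG - ε·v·ggᵀ + λI is invertible, define Δ(ε) = (GᵀVG - ε·v·ggᵀ + λI)⁻¹(-ε·r·g - b). Then Δ(0) = -M⁻¹b, and the map ε ↦ Δ(ε) is differentiable at ε = 0 with derivative (v·(gᵀΔ(0)) - r)·M⁻¹g; equivalently, Δ(ε) - Δ(0) = ε·(v·gᵀΔ(0) - r)·(GᵀVG + λI)⁻¹ g + o(ε) as ε → 0. -/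
import Mathlib


open Matrix Filter

/-- Corollary 1 (Gauss-Newton influence function): with `M := GᵀVG + λI`
invertible and `GᵀVG - ε·v·ggᵀ + λI` invertible for `ε` near `0`, the map
`Δ(ε) = (GᵀVG - ε·v·ggᵀ + λI)⁻¹(-ε·r·g - b)` satisfies `Δ(0) = -M⁻¹b` and is
differentiable at `ε = 0` with derivative `(v·(gᵀΔ(0)) - r)·M⁻¹g`. -/
theorem stmt_7 (n p : ℕ) (G : Matrix (Fin n) (Fin p) ℝ)
    (V : Matrix (Fin n) (Fin n) ℝ) (hV : V.IsDiag)
    (g : Fin p → ℝ) (v r : ℝ) (b : Fin p → ℝ) (lam : ℝ)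
    (hM : IsUnit (Gᵀ * V * G + lam • (1 : Matrix (Fin p) (Fin p) ℝ)))
    (hnb : ∀ᶠ ε in nhds (0 : ℝ),
      IsUnit (Gᵀ * V * G - ε • (v • vecMulVec g g) +
        lam • (1 : Matrix (Fin p) (Fin p) ℝ))) :
    let M : Matrix (Fin p) (Fin p) ℝ :=
      Gᵀ * V * G + lam • (1 : Matrix (Fin p) (Fin p) ℝ)
    let Δ : ℝ → (Fin p → ℝ) := fun ε =>
      (Gᵀ * V * G - ε • (v • vecMulVec g g) +
        lam • (1 : Matrix (Fin p) (Fin p) ℝ))⁻¹ *ᵥ (-(ε * r) • g - b)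
    Δ 0 = -(M⁻¹ *ᵥ b) ∧
      HasDerivAt Δ ((v * (g ⬝ᵥ Δ 0) - r) • (M⁻¹ *ᵥ g)) 0 := by
  intro M Δ
  set A : ℝ → Matrix (Fin p) (Fin p) ℝ := fun ε =>
    Gᵀ * V * G - ε • (v • vecMulVec g g) + lam • (1 : Matrix (Fin p) (Fin p) ℝ)
    with hAdef
  have hA0 : A 0 = M := by simp [hAdef, M]
  have hMd : IsUnit M.det := (Matrix.isUnit_iff_isUnit_det M).mp hM
  have hΔ0 : Δ 0 = -(M⁻¹ *ᵥ b) := by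
    show (A 0)⁻¹ *ᵥ (-(0 * r) • g - b) = -(M⁻¹ *ᵥ b)
    rw [hA0]
    simp [Matrix.mulVec_neg]
  refine ⟨hΔ0, ?_⟩
  set w : Fin p → ℝ := (v * (g ⬝ᵥ Δ 0) - r) • g with hw
  -- key algebraic identity
  have hAε : ∀ ε : ℝ, A ε = M - ε • (v • vecMulVec g g) := by
    intro ε; simp only [A, M]; abel
  have hggv : vecMulVec g g *ᵥ Δ 0 = (g ⬝ᵥ Δ 0) • g := by
    ext i
    simp only [Matrix.mulVec, Matrix.vecMulVec_apply, dotProduct,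
      Pi.smul_apply, smul_eq_mul, Finset.sum_mul, Finset.mul_sum]
    exact Finset.sum_congr rfl fun j _ => by ring
  have key : ∀ ε : ℝ, IsUnit (A ε) → Δ ε - Δ 0 = ε • ((A ε)⁻¹ *ᵥ w) := by
    intro ε hu
    have hd : IsUnit (A ε).det := (Matrix.isUnit_iff_isUnit_det _).mp hu
    have h1 : A ε *ᵥ Δ ε = -(ε * r) • g - b := by
      show A ε *ᵥ ((A ε)⁻¹ *ᵥ _) = _
      rw [Matrix.mulVec_mulVec, Matrix.mul_nonsing_inv _ hd, Matrix.one_mulVec]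
    have h2 : M *ᵥ Δ 0 = -b := by
      rw [hΔ0, Matrix.mulVec_neg, Matrix.mulVec_mulVec, Matrix.mul_nonsing_inv _ hMd,
        Matrix.one_mulVec]
    have h3 : A ε *ᵥ (Δ ε - Δ 0) = ε • w := by
      rw [Matrix.mulVec_sub, h1, hAε ε, Matrix.sub_mulVec, h2,
        Matrix.smul_mulVec, Matrix.smul_mulVec, hggv, hw]
      module
    calc Δ ε - Δ 0 = (A ε)⁻¹ *ᵥ (A ε *ᵥ (Δ ε - Δ 0)) := by
          rw [Matrix.mulVec_mulVec, Matrix.nonsing_inv_mul _ hd, Matrix.one_mulVec]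
      _ = ε • ((A ε)⁻¹ *ᵥ w) := by rw [h3, Matrix.mulVec_smul]
  -- continuity of ε ↦ (A ε)⁻¹ *ᵥ w at 0
  have hinvF : ∀ ε : ℝ, (A ε)⁻¹ *ᵥ w = ((A ε).det)⁻¹ • ((A ε).adjugate *ᵥ w) := by
    intro ε
    rw [Matrix.inv_def, Ring.inverse_eq_inv, Matrix.smul_mulVec]
  have hAc : Continuous A := by
    apply Continuous.add _ continuous_const
    exact continuous_const.sub (continuous_id.smul continuous_const)
  have hdetc : Continuous fun ε => (A ε).det := hAc.matrix_det
  have hne : (A 0).det ≠ 0 := by rw [hA0]; exact hMd.ne_zero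
  have hFc : ContinuousAt (fun ε => (A ε)⁻¹ *ᵥ w) 0 := by
    simp only [hinvF]
    exact (hdetc.continuousAt.inv₀ hne).smul
      ((hAc.matrix_adjugate.matrix_mulVec continuous_const).continuousAt)
  have hF0 : (A 0)⁻¹ *ᵥ w = (v * (g ⬝ᵥ Δ 0) - r) • (M⁻¹ *ᵥ g) := by
    rw [hA0, hw, Matrix.mulVec_smul]
  rw [hasDerivAt_iff_tendsto_slope]
  have hTend : Tendsto (fun ε => (A ε)⁻¹ *ᵥ w) (nhdsWithin 0 {(0:ℝ)}ᶜ)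
      (nhds ((v * (g ⬝ᵥ Δ 0) - r) • (M⁻¹ *ᵥ g))) := by
    rw [← hF0]
    exact hFc.tendsto.mono_left nhdsWithin_le_nhds
  refine hTend.congr' ?_
  filter_upwards [self_mem_nhdsWithin, nhdsWithin_le_nhds hnb] with ε hε hu
  have hε0 : ε ≠ 0 := hε
  rw [slope_def_module, sub_zero, key ε hu, smul_smul, inv_mul_cancel₀ hε0, one_smul]
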